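/- arXiv:1102.4699 — 3 statements merged into one kernel-verified Lean document; each statement's English description precedes it below -/
import Mathlib

section
/- (Query elimination) If there exists a deterministic query algorithm for f making at most k queries on every input with average error at most δ under μ^{⊗n}, then there exists a deterministic query algorithm making at most k−1 queries on every input with average error at most δ + Inf_max(f, μ), where Inf_max(f, μ) = max_i Inf_i(f, μ). -/
open MeasureTheory Function
open scoped ENNReal


inductive DTree (X Z : Type) (n : ℕ) : Type where
  | leaf (z : Z) : DTree X Z n
  | node (i : Fin n) (children : X → DTree X Z n) : DTree X Z n

def DTree.eval {X Z : Type} {n : ℕ} : DTree X Z n → (Fin n → X) → Z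
  | .leaf z, _ => z
  | .node i c, x => (c (x i)).eval x

def DTree.depth {X Z : Type} {n : ℕ} [Fintype X] : DTree X Z n → ℕ
  | .leaf _ => 0
  | .node _ c => 1 + Finset.univ.sup fun a => (c a).depth

/-- Restrict a decision tree by fixing the answer to query `i` to be `a`. -/
def DTree.fix {X Z : Type} {n : ℕ} (i : Fin n) (a : X) : DTree X Z n → DTree X Z n
  | .leaf z => .leaf z
  | .node j c => if j = i then (c a).fix i a else .node j (fun b => (c b).fix i a)

theorem DTree.eval_fix {X Z : Type} {n : ℕ} (i : Fin n) (a : X) (T : DTree X Z n)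
    (x : Fin n → X) : (T.fix i a).eval x = T.eval (Function.update x i a) := by
  induction T with
  | leaf z => rfl
  | node j c ih =>
    by_cases hj : j = i
    · subst hj
      simp [DTree.fix, DTree.eval, ih]
    · simp [DTree.fix, hj, DTree.eval, ih, Function.update_of_ne hj]

theorem DTree.depth_fix {X Z : Type} {n : ℕ} [Fintype X] (i : Fin n) (a : X)
    (T : DTree X Z n) : (T.fix i a).depth ≤ T.depth := by
  induction T with
  | leaf z => exact le_refl 0
  | node j c ih =>
    by_cases hj : j = i
    · subst hj
      simp only [DTree.fix, if_pos rfl]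
      calc ((c a).fix j a).depth ≤ (c a).depth := ih a
        _ ≤ Finset.univ.sup fun b => (c b).depth :=
            Finset.le_sup (f := fun b => (c b).depth) (Finset.mem_univ a)
        _ ≤ (DTree.node j c).depth := Nat.le_add_left _ 1
    · simp only [DTree.fix, if_neg hj, DTree.depth]
      exact Nat.add_le_add_left (Finset.sup_mono_fun fun b _ => ih b) 1

/-- Iterated integral of slices is at most the product measure, for arbitrary sets. -/
theorem lintegral_slice_le {α β : Type*} [MeasurableSpace α] [MeasurableSpace β]
    (μ : Measure α) (ν : Measure β) [SFinite μ] [SFinite ν] (S : Set (α × β)) :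
    ∫⁻ b, μ {a | (a, b) ∈ S} ∂ν ≤ (μ.prod ν) S := by
  rw [measure_eq_iInf]
  refine le_iInf fun t => le_iInf fun hst => le_iInf fun ht => ?_
  calc ∫⁻ b, μ {a | (a, b) ∈ S} ∂ν
      ≤ ∫⁻ b, μ ((fun a => (a, b)) ⁻¹' t) ∂ν :=
        lintegral_mono fun b => measure_mono fun a ha => hst ha
    _ = (μ.prod ν) t := (Measure.prod_apply_symm ht).symm

/-- Resampling one coordinate preserves the product measure. -/
theorem map_update_eq {𝒳 : Type} [MeasurableSpace 𝒳] {n : ℕ} (μ : Measure 𝒳)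
    [IsProbabilityMeasure μ] (i : Fin n) :
    Measure.map (fun p : (Fin n → 𝒳) × 𝒳 => Function.update p.1 i p.2)
      ((Measure.pi fun _ : Fin n => μ).prod μ) = Measure.pi fun _ : Fin n => μ := by
  refine (Measure.pi_eq fun s hs => ?_).symm
  rw [Measure.map_apply measurable_update' (MeasurableSet.univ_pi hs)]
  have hpre : (fun p : (Fin n → 𝒳) × 𝒳 => Function.update p.1 i p.2) ⁻¹'
      (Set.pi Set.univ s) =
      (Set.pi Set.univ (Function.update s i Set.univ)) ×ˢ (s i) := by
    ext ⟨x, a⟩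
    simp only [Set.mem_preimage, Set.mem_pi, Set.mem_univ, true_implies, Set.mem_prod]
    constructor
    · intro h
      refine ⟨fun j => ?_, by simpa using h i⟩
      by_cases hj : j = i
      · subst hj; simp
      · simpa [Function.update_of_ne hj] using h j
    · rintro ⟨h1, h2⟩ j
      by_cases hj : j = i
      · subst hj; simpa
      · simpa [Function.update_of_ne hj] using h1 j
  rw [hpre, Measure.prod_prod, Measure.pi_pi]
  have : ∀ j, μ (Function.update s i Set.univ j) =
      Function.update (fun j => μ (s j)) i (μ Set.univ) j := fun j =>
    Function.apply_update (fun _ t => μ t) s i Set.univ j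
  simp_rw [this]
  rw [Finset.prod_update_of_mem (Finset.mem_univ i)]
  rw [measure_univ, one_mul, mul_comm, Finset.sdiff_singleton_eq_erase,
    Finset.mul_prod_erase Finset.univ (fun j => μ (s j)) (Finset.mem_univ i)]

/-- Query elimination: a depth-k tree with average error δ yields a depth-(k−1)
tree with average error at most δ + Inf_max(f, μ). -/
theorem query_elimination
    {𝒳 𝒵 : Type} [Fintype 𝒳] [Fintype 𝒵] [MeasurableSpace 𝒳]
    {n : ℕ} (μ : Measure 𝒳) [IsProbabilityMeasure μ]
    (f : (Fin n → 𝒳) → 𝒵) (k : ℕ) (δ : ℝ≥0∞)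
    (T : DTree 𝒳 𝒵 n) (hdepth : T.depth ≤ k)
    (herr : (Measure.pi fun _ : Fin n => μ) {x | T.eval x ≠ f x} ≤ δ) :
    ∃ T' : DTree 𝒳 𝒵 n, T'.depth ≤ k - 1 ∧
      (Measure.pi fun _ : Fin n => μ) {x | T'.eval x ≠ f x}
        ≤ δ + ⨆ i : Fin n, ((Measure.pi fun _ : Fin n => μ).prod μ)
            {p | f p.1 ≠ f (Function.update p.1 i p.2)} := by
  have hX : Nonempty 𝒳 := by
    by_contra h
    rw [not_nonempty_iff] at h
    have h1 := measure_univ (μ := μ)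
    rw [Set.univ_eq_empty_iff.mpr h, measure_empty] at h1
    simp at h1
  set ν : Measure (Fin n → 𝒳) := Measure.pi fun _ : Fin n => μ with hν
  cases T with
  | leaf z =>
    exact ⟨.leaf z, Nat.zero_le _, le_trans herr le_self_add⟩
  | node i c =>
    have hchild : ∀ a, (c a).depth ≤ k - 1 := by
      intro a
      have h1 : 1 + (Finset.univ.sup fun b => (c b).depth) ≤ k := by
        simpa [DTree.depth] using hdepth
      have h2 : (c a).depth ≤ Finset.univ.sup fun b => (c b).depth :=
        Finset.le_sup (f := fun b => (c b).depth) (Finset.mem_univ a)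
      omega
    set upd : (Fin n → 𝒳) × 𝒳 → (Fin n → 𝒳) := fun p => Function.update p.1 i p.2 with hupd
    set SA : Set ((Fin n → 𝒳) × 𝒳) :=
      {p | (DTree.node i c).eval (upd p) ≠ f (upd p)} with hSA
    set SB : Set ((Fin n → 𝒳) × 𝒳) := {p | f (upd p) ≠ f p.1} with hSB
    set G : 𝒳 → ℝ≥0∞ := fun a => ν {x | (x, a) ∈ SA ∪ SB} with hG
    obtain ⟨a₀, ha₀⟩ := Finite.exists_min G
    refine ⟨(c a₀).fix i a₀, le_trans (DTree.depth_fix i a₀ (c a₀)) (hchild a₀), ?_⟩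
    have step1 : ν {x | ((c a₀).fix i a₀).eval x ≠ f x} ≤ G a₀ := by
      apply measure_mono
      intro x hx
      simp only [Set.mem_setOf_eq, DTree.eval_fix] at hx
      by_cases hfx : f (Function.update x i a₀) = f x
      · left
        show (DTree.node i c).eval (upd (x, a₀)) ≠ f (upd (x, a₀))
        simp only [hupd, DTree.eval, Function.update_self, hfx]
        exact hx
      · right
        exact hfx
    have step2 : G a₀ ≤ ∫⁻ a, G a ∂μ := by
      calc G a₀ = ∫⁻ _, G a₀ ∂μ := by rw [lintegral_const, measure_univ, mul_one]
        _ ≤ ∫⁻ a, G a ∂μ := lintegral_mono fun a => ha₀ a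
    have step3 : ∫⁻ a, G a ∂μ ≤ (ν.prod μ) (SA ∪ SB) :=
      lintegral_slice_le ν μ (SA ∪ SB)
    have step4 : (ν.prod μ) (SA ∪ SB) ≤ (ν.prod μ) SA + (ν.prod μ) SB :=
      measure_union_le SA SB
    have stepA : (ν.prod μ) SA ≤ δ := by
      have hpre : SA = upd ⁻¹' {y | (DTree.node i c).eval y ≠ f y} := rfl
      calc (ν.prod μ) SA
          ≤ (Measure.map upd (ν.prod μ)) {y | (DTree.node i c).eval y ≠ f y} := by
            rw [hpre]
            exact Measure.le_map_apply measurable_update'.aemeasurable _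
        _ = ν {y | (DTree.node i c).eval y ≠ f y} := by rw [hupd, hν, map_update_eq]
        _ ≤ δ := herr
    have stepB : (ν.prod μ) SB ≤
        ⨆ j : Fin n, (ν.prod μ) {p | f p.1 ≠ f (Function.update p.1 j p.2)} := by
      have heq : SB = {p : (Fin n → 𝒳) × 𝒳 | f p.1 ≠ f (Function.update p.1 i p.2)} := by
        ext p
        exact ne_comm
      rw [heq]
      exact le_iSup (fun j => (ν.prod μ) {p | f p.1 ≠ f (Function.update p.1 j p.2)}) i
    calc ν {x | ((c a₀).fix i a₀).eval x ≠ f x}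
        ≤ (ν.prod μ) SA + (ν.prod μ) SB :=
          le_trans step1 (le_trans step2 (le_trans step3 step4))
      _ ≤ δ + ⨆ j : Fin n, (ν.prod μ) {p | f p.1 ≠ f (Function.update p.1 j p.2)} :=
          add_le_add stepA stepB
end

section
/- If a deterministic decision tree makes at most k queries on every input and has error probability at most ε under μ^{⊗n} for computing f, then ε + k · Inf_max(f, μ) ≥ 1 − max_{z∈𝒵} Pr[f(X) = z]. -/
open MeasureTheory Function
open scoped ENNReal


set_option linter.unusedSectionVars false

noncomputable section Aux
open Classical Set

variable {𝒳 : Type} [Fintype 𝒳] [MeasurableSpace 𝒳]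

/-- indicator of a proposition -/
def xind (P : Prop) : ℝ≥0∞ := if P then 1 else 0

lemma xind_le_one (P : Prop) : xind P ≤ 1 := by
  unfold xind; split <;> simp

lemma xind_mono {P Q : Prop} (h : P → Q) : xind P ≤ xind Q := by
  unfold xind; split
  · rw [if_pos (h ‹P›)]
  · simp

lemma xind_congr {P Q : Prop} (h : P ↔ Q) : xind P = xind Q := by
  unfold xind; simp [h]

lemma xind_split {P Q R : Prop} (h : P → Q ∨ R) : xind P ≤ xind Q + xind R := by
  unfold xind; split
  · rcases h ‹P› with h' | h'
    · rw [if_pos h']; exact le_add_right le_rfl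
    · rw [if_pos h']; exact le_add_left le_rfl
  · simp

lemma one_le_xind_add {P Q : Prop} (h : P ∨ Q) : 1 ≤ xind P + xind Q := by
  have := xind_split (P := True) (fun _ => h)
  simpa [xind] using this

/-- The atom of the (finite) σ-algebra containing `t`. -/
def atomOf (t : 𝒳) : Set 𝒳 := {s | ∀ B : Set 𝒳, MeasurableSet B → t ∈ B → s ∈ B}

lemma mem_atomOf_self (t : 𝒳) : t ∈ atomOf t := fun _ _ h => h

lemma atomOf_subset {B : Set 𝒳} (hB : MeasurableSet B) {t : 𝒳} (ht : t ∈ B) :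
    atomOf t ⊆ B := fun _ hs => hs B hB ht

lemma measurableSet_atomOf (t : 𝒳) : MeasurableSet (atomOf t) := by
  have : atomOf t = ⋂ (B : Set 𝒳) (_ : MeasurableSet B) (_ : t ∈ B), B := by
    ext s; simp [atomOf]
  rw [this]
  exact MeasurableSet.iInter fun B => MeasurableSet.iInter fun hB =>
    MeasurableSet.iInter fun _ => hB

lemma mem_atomOf_symm {s t : 𝒳} (h : s ∈ atomOf t) : t ∈ atomOf s := by
  intro B hB hsB
  by_contra htB
  exact (h Bᶜ hB.compl htB) hsB

lemma atomOf_eq_of_mem {s t : 𝒳} (h : s ∈ atomOf t) : atomOf s = atomOf t := by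
  apply Set.Subset.antisymm
  · intro u hu B hB htB
    exact hu B hB (h B hB htB)
  · intro u hu B hB hsB
    exact hu B hB (mem_atomOf_symm h B hB hsB)

lemma atomOf_eq_of_inter {s t : 𝒳} (h : (atomOf s ∩ atomOf t).Nonempty) :
    atomOf s = atomOf t := by
  obtain ⟨u, hus, hut⟩ := h
  rw [← atomOf_eq_of_mem hus, atomOf_eq_of_mem hut]

variable [Nonempty 𝒳]

/-- a representative of each set -/
def repSet (A : Set 𝒳) : 𝒳 := if h : A.Nonempty then h.some else Classical.arbitrary 𝒳

def rep (t : 𝒳) : 𝒳 := repSet (atomOf t)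

lemma rep_mem (t : 𝒳) : rep t ∈ atomOf t := by
  have h : (atomOf t).Nonempty := ⟨t, mem_atomOf_self t⟩
  rw [rep, repSet, dif_pos h]
  exact h.some_mem

lemma rep_eq_of_atomOf_eq {s t : 𝒳} (h : atomOf s = atomOf t) : rep s = rep t := by
  rw [rep, rep, h]

lemma rep_rep (t : 𝒳) : rep (rep t) = rep t :=
  rep_eq_of_atomOf_eq (atomOf_eq_of_mem (rep_mem t))

/-- discrete weight function -/
def pwt (μ : Measure 𝒳) (t : 𝒳) : ℝ≥0∞ := if rep t = t then μ (atomOf t) else 0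

lemma sum_pwt (μ : Measure 𝒳) [IsProbabilityMeasure μ] : ∑ t : 𝒳, pwt μ t = 1 := by
  classical
  have h1 : ∑ t : 𝒳, pwt μ t = ∑ t ∈ Finset.univ.filter (fun t => rep t = t), μ (atomOf t) := by
    rw [Finset.sum_filter]; rfl
  rw [h1]
  have hd : (↑(Finset.univ.filter (fun t : 𝒳 => rep t = t)) : Set 𝒳).PairwiseDisjoint atomOf := by
    intro a ha b hb hab
    simp only [Finset.coe_filter, mem_setOf_eq, Finset.mem_univ, true_and] at ha hb
    apply Set.disjoint_left.mpr
    intro u hua hub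
    exact hab (by rw [← ha, ← hb, rep_eq_of_atomOf_eq (atomOf_eq_of_inter ⟨u, hua, hub⟩)])
  rw [← measure_biUnion_finset hd (fun b _ => measurableSet_atomOf b)]
  have hcover : ⋃ t ∈ Finset.univ.filter (fun t : 𝒳 => rep t = t), atomOf t = univ := by
    apply Set.eq_univ_of_forall
    intro x
    refine Set.mem_biUnion ?_ (mem_atomOf_symm (rep_mem x))
    exact Finset.mem_filter.mpr ⟨Finset.mem_univ _, rep_rep x⟩
  rw [hcover, measure_univ]

variable {n : ℕ}

/-- every measurable set in the product is saturated w.r.t. atom boxes -/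
lemma pi_saturate {B : Set (Fin n → 𝒳)} (hB : MeasurableSet B) {x : Fin n → 𝒳} (hx : x ∈ B) :
    Set.pi Set.univ (fun j => atomOf (x j)) ⊆ B := by
  let m' : MeasurableSpace (Fin n → 𝒳) :=
  { MeasurableSet' := fun C => ∀ y ∈ C, Set.pi Set.univ (fun j => atomOf (y j)) ⊆ C
    measurableSet_empty := fun y hy => absurd hy (Set.notMem_empty y)
    measurableSet_compl := by
      intro C hC y hy z hz hzC
      apply hy
      apply hC z hzC
      intro j _
      exact mem_atomOf_symm (hz j (Set.mem_univ j))
    measurableSet_iUnion := by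
      intro g hg y hy
      obtain ⟨i, hi⟩ := Set.mem_iUnion.mp hy
      exact Set.subset_iUnion_of_subset i (hg i y hi) }
  have hle : (MeasurableSpace.pi : MeasurableSpace (Fin n → 𝒳)) ≤ m' := by
    apply iSup_le
    intro j
    intro s hs
    obtain ⟨A, hA, rfl⟩ := hs
    intro y hy z hz
    exact atomOf_subset hA hy (hz j (Set.mem_univ j))
  exact hle B hB x hx

lemma prod_saturate {B : Set ((Fin n → 𝒳) × 𝒳)} (hB : MeasurableSet B)
    {q : (Fin n → 𝒳) × 𝒳} (hq : q ∈ B) :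
    (Set.pi Set.univ (fun j => atomOf (q.1 j))) ×ˢ atomOf q.2 ⊆ B := by
  let m' : MeasurableSpace ((Fin n → 𝒳) × 𝒳) :=
  { MeasurableSet' := fun C => ∀ r ∈ C,
      (Set.pi Set.univ (fun j => atomOf (r.1 j))) ×ˢ atomOf r.2 ⊆ C
    measurableSet_empty := fun r hr => absurd hr (Set.notMem_empty r)
    measurableSet_compl := by
      intro C hC r hr z hz hzC
      apply hr
      apply hC z hzC
      refine Set.mem_prod.mpr ⟨?_, mem_atomOf_symm hz.2⟩
      intro j _
      exact mem_atomOf_symm (hz.1 j (Set.mem_univ j))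
    measurableSet_iUnion := by
      intro g hg r hr
      obtain ⟨i, hi⟩ := Set.mem_iUnion.mp hr
      exact Set.subset_iUnion_of_subset i (hg i r hi) }
  have hle : (Prod.instMeasurableSpace : MeasurableSpace ((Fin n → 𝒳) × 𝒳)) ≤ m' := by
    apply sup_le
    · intro s hs
      obtain ⟨A, hA, rfl⟩ := hs
      intro r hr z hz
      exact pi_saturate hA hr (hz.1)
    · intro s hs
      obtain ⟨A, hA, rfl⟩ := hs
      intro r hr z hz
      exact atomOf_subset hA hr hz.2
  exact hle B hB q hq



lemma sum_pwt_le_meas (μ : Measure 𝒳) [IsProbabilityMeasure μ] (S : Set (Fin n → 𝒳)) :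
    ∑ x : Fin n → 𝒳, (∏ j, pwt μ (x j)) * xind (x ∈ S)
      ≤ (Measure.pi fun _ : Fin n => μ) S := by
  classical
  set ν := (Measure.pi fun _ : Fin n => μ) with hν
  have key : ∀ B : Set (Fin n → 𝒳), MeasurableSet B →
      ∑ x : Fin n → 𝒳, (∏ j, pwt μ (x j)) * xind (x ∈ B) ≤ ν B := by
    intro B hB
    set F := Finset.univ.filter
      (fun x : Fin n → 𝒳 => x ∈ B ∧ ∀ j, rep (x j) = x j) with hF
    have stepa : ∑ x : Fin n → 𝒳, (∏ j, pwt μ (x j)) * xind (x ∈ B)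
        = ∑ x ∈ F, ∏ j, pwt μ (x j) := by
      rw [hF, Finset.sum_filter]
      apply Finset.sum_congr rfl
      intro x _
      by_cases hxB : x ∈ B
      · by_cases hrep : ∀ j, rep (x j) = x j
        · rw [if_pos ⟨hxB, hrep⟩, xind, if_pos hxB, mul_one]
        · rw [if_neg (by tauto)]
          push_neg at hrep
          obtain ⟨j, hj⟩ := hrep
          rw [Finset.prod_eq_zero (Finset.mem_univ j) (by rw [pwt, if_neg hj]), zero_mul]
      · rw [if_neg (by tauto), xind, if_neg hxB, mul_zero]
    have stepb : ∀ x ∈ F, (∏ j, pwt μ (x j)) = ν (Set.pi Set.univ fun j => atomOf (x j)) := by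
      intro x hx
      obtain ⟨-, hrep⟩ := Finset.mem_filter.mp hx
      rw [hν, Measure.pi_pi]
      exact Finset.prod_congr rfl fun j _ => by rw [pwt, if_pos (hrep.2 j)]
    rw [stepa, Finset.sum_congr rfl stepb]
    have hd : (↑F : Set (Fin n → 𝒳)).PairwiseDisjoint
        (fun x => Set.pi Set.univ fun j => atomOf (x j)) := by
      intro a ha b hb hab
      simp only [hF, Finset.coe_filter, Set.mem_setOf_eq, Finset.mem_univ, true_and] at ha hb
      apply Set.disjoint_left.mpr
      intro z hza hzb
      apply hab
      funext j
      have h1 := hza j (Set.mem_univ j)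
      have h2 := hzb j (Set.mem_univ j)
      have := atomOf_eq_of_inter ⟨z j, h1, h2⟩
      rw [← ha.2 j, ← hb.2 j]
      exact rep_eq_of_atomOf_eq this
    rw [← measure_biUnion_finset hd
      (fun x _ => MeasurableSet.pi (Set.to_countable _) fun j _ => measurableSet_atomOf _)]
    apply measure_mono
    apply Set.iUnion₂_subset
    intro x hx
    exact pi_saturate hB (Finset.mem_filter.mp hx).2.1
  calc ∑ x : Fin n → 𝒳, (∏ j, pwt μ (x j)) * xind (x ∈ S)
      ≤ ∑ x : Fin n → 𝒳, (∏ j, pwt μ (x j)) * xind (x ∈ toMeasurable ν S) := by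
        exact Finset.sum_le_sum fun x _ =>
          mul_le_mul_right (xind_mono fun h => subset_toMeasurable ν S h) _
    _ ≤ ν (toMeasurable ν S) := key _ (measurableSet_toMeasurable ν S)
    _ = ν S := measure_toMeasurable S

lemma sum_pwt_le_prod (μ : Measure 𝒳) [IsProbabilityMeasure μ] (S : Set ((Fin n → 𝒳) × 𝒳)) :
    ∑ q : (Fin n → 𝒳) × 𝒳, ((∏ j, pwt μ (q.1 j)) * pwt μ q.2) * xind (q ∈ S)
      ≤ ((Measure.pi fun _ : Fin n => μ).prod μ) S := by
  classical
  set π := ((Measure.pi fun _ : Fin n => μ).prod μ) with hπ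
  have key : ∀ B : Set ((Fin n → 𝒳) × 𝒳), MeasurableSet B →
      ∑ q : (Fin n → 𝒳) × 𝒳, ((∏ j, pwt μ (q.1 j)) * pwt μ q.2) * xind (q ∈ B) ≤ π B := by
    intro B hB
    set F := Finset.univ.filter
      (fun q : (Fin n → 𝒳) × 𝒳 => q ∈ B ∧ (∀ j, rep (q.1 j) = q.1 j) ∧ rep q.2 = q.2) with hF
    have stepa : ∑ q : (Fin n → 𝒳) × 𝒳, ((∏ j, pwt μ (q.1 j)) * pwt μ q.2) * xind (q ∈ B)
        = ∑ q ∈ F, (∏ j, pwt μ (q.1 j)) * pwt μ q.2 := by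
      rw [hF, Finset.sum_filter]
      apply Finset.sum_congr rfl
      intro q _
      by_cases hqB : q ∈ B
      · by_cases hrep : ∀ j, rep (q.1 j) = q.1 j
        · by_cases hrep2 : rep q.2 = q.2
          · rw [if_pos ⟨hqB, hrep, hrep2⟩, xind, if_pos hqB, mul_one]
          · rw [if_neg (by tauto), pwt, if_neg hrep2, mul_zero, zero_mul]
        · rw [if_neg (by tauto)]
          push_neg at hrep
          obtain ⟨j, hj⟩ := hrep
          rw [Finset.prod_eq_zero (Finset.mem_univ j) (by rw [pwt, if_neg hj]), zero_mul,
            zero_mul]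
      · rw [if_neg (by tauto), xind, if_neg hqB, mul_zero]
    have stepb : ∀ q ∈ F, (∏ j, pwt μ (q.1 j)) * pwt μ q.2
        = π ((Set.pi Set.univ fun j => atomOf (q.1 j)) ×ˢ atomOf q.2) := by
      intro q hq
      obtain ⟨-, -, hrep, hrep2⟩ := Finset.mem_filter.mp hq
      rw [hπ, Measure.prod_prod, Measure.pi_pi, pwt, if_pos hrep2]
      congr 1
      exact Finset.prod_congr rfl fun j _ => by rw [pwt, if_pos (hrep j)]
    rw [stepa, Finset.sum_congr rfl stepb]
    have hd : (↑F : Set ((Fin n → 𝒳) × 𝒳)).PairwiseDisjoint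
        (fun q => (Set.pi Set.univ fun j => atomOf (q.1 j)) ×ˢ atomOf q.2) := by
      intro a ha b hb hab
      simp only [hF, Finset.coe_filter, Set.mem_setOf_eq, Finset.mem_univ, true_and] at ha hb
      apply Set.disjoint_left.mpr
      intro z hza hzb
      apply hab
      have h2 : a.2 = b.2 := by
        rw [← ha.2.2, ← hb.2.2]
        exact rep_eq_of_atomOf_eq (atomOf_eq_of_inter ⟨z.2, hza.2, hzb.2⟩)
      have h1 : a.1 = b.1 := by
        funext j
        rw [← ha.2.1 j, ← hb.2.1 j]
        exact rep_eq_of_atomOf_eq (atomOf_eq_of_inter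
          ⟨z.1 j, hza.1 j (Set.mem_univ j), hzb.1 j (Set.mem_univ j)⟩)
      exact Prod.ext h1 h2
    rw [← measure_biUnion_finset hd (fun q _ =>
      (MeasurableSet.pi (Set.to_countable _) fun j _ => measurableSet_atomOf _).prod
        (measurableSet_atomOf _))]
    apply measure_mono
    apply Set.iUnion₂_subset
    intro q hq
    exact prod_saturate hB (Finset.mem_filter.mp hq).2.1
  calc ∑ q : (Fin n → 𝒳) × 𝒳, ((∏ j, pwt μ (q.1 j)) * pwt μ q.2) * xind (q ∈ S)
      ≤ ∑ q : (Fin n → 𝒳) × 𝒳, ((∏ j, pwt μ (q.1 j)) * pwt μ q.2)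
          * xind (q ∈ toMeasurable π S) := by
        exact Finset.sum_le_sum fun q _ =>
          mul_le_mul_right (xind_mono fun h => subset_toMeasurable π S h) _
    _ ≤ π (toMeasurable π S) := key _ (measurableSet_toMeasurable π S)
    _ = π S := measure_toMeasurable S


variable {𝒵 : Type} [Fintype 𝒵]


lemma keyD {n : ℕ} (p : 𝒳 → ℝ≥0∞) (hp : ∑ t : 𝒳, p t = 1)
    (f : (Fin n → 𝒳) → 𝒵) (I M : ℝ≥0∞)
    (hI : ∀ i : Fin n, ∑ q : (Fin n → 𝒳) × 𝒳,
        ((∏ j, p (q.1 j)) * p q.2) * xind (f q.1 ≠ f (Function.update q.1 i q.2)) ≤ I)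
    (hM : ∀ z : 𝒵, ∑ x : Fin n → 𝒳, (∏ j, p (x j)) * xind (f x = z) ≤ M)
    (T : DTree 𝒳 𝒵 n) :
    ∀ (s : Finset (Fin n)) (v : Fin n → 𝒳),
      ∑ x : Fin n → 𝒳, (∏ j, p (x j))
          * xind (T.eval (fun j => if j ∈ s then v j else x j) = f x)
        ≤ (T.depth : ℝ≥0∞) * I + M := by
  induction T with
  | leaf z =>
    intro s v
    have : ∑ x : Fin n → 𝒳, (∏ j, p (x j))
        * xind ((DTree.leaf z : DTree 𝒳 𝒵 n).eval (fun j => if j ∈ s then v j else x j) = f x)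
        = ∑ x : Fin n → 𝒳, (∏ j, p (x j)) * xind (f x = z) := by
      refine Finset.sum_congr rfl fun x _ => ?_
      congr 1
      exact xind_congr (by simp [DTree.eval, eq_comm])
    rw [this]
    simp only [DTree.depth, Nat.cast_zero, zero_mul, zero_add]
    exact hM z
  | node i c ih =>
    intro s v
    have hdepth : ((DTree.node i c).depth : ℝ≥0∞)
        = ((1 + Finset.univ.sup fun a => (c a).depth : ℕ) : ℝ≥0∞) := rfl
    by_cases hi : i ∈ s
    · have heval : ∀ x : Fin n → 𝒳,
          (DTree.node i c).eval (fun j => if j ∈ s then v j else x j)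
          = (c (v i)).eval (fun j => if j ∈ s then v j else x j) := by
        intro x; simp [DTree.eval, if_pos hi]
      calc ∑ x : Fin n → 𝒳, (∏ j, p (x j))
            * xind ((DTree.node i c).eval (fun j => if j ∈ s then v j else x j) = f x)
          = ∑ x : Fin n → 𝒳, (∏ j, p (x j))
            * xind ((c (v i)).eval (fun j => if j ∈ s then v j else x j) = f x) := by
            exact Finset.sum_congr rfl fun x _ => by rw [heval x]
        _ ≤ ((c (v i)).depth : ℝ≥0∞) * I + M := ih (v i) s v
        _ ≤ ((DTree.node i c).depth : ℝ≥0∞) * I + M := by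
            refine add_le_add_left (mul_le_mul_left ?_ I) M
            rw [hdepth]
            exact Nat.cast_le.mpr (le_trans (Finset.le_sup (f := fun a => (c a).depth) (Finset.mem_univ (v i)))
              (Nat.le_add_left _ 1))
    · -- the interesting case
      set d' : ℕ := Finset.univ.sup fun a => (c a).depth with hd'
      have heval : ∀ x : Fin n → 𝒳,
          (DTree.node i c).eval (fun j => if j ∈ s then v j else x j)
          = (c (x i)).eval (fun j => if j ∈ s then v j else x j) := by
        intro x; simp [DTree.eval, if_neg hi]
      -- duplicate the sum with an extra fresh coordinate
      have h1 : ∑ x : Fin n → 𝒳, (∏ j, p (x j))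
            * xind ((c (x i)).eval (fun j => if j ∈ s then v j else x j) = f x)
          = ∑ q : (Fin n → 𝒳) × 𝒳, ((∏ j, p (q.1 j)) * p q.2)
            * xind ((c (q.1 i)).eval (fun j => if j ∈ s then v j else q.1 j) = f q.1) := by
        rw [Fintype.sum_prod_type]
        refine Finset.sum_congr rfl fun x _ => ?_
        have : ∀ t : 𝒳, ((∏ j, p (x j)) * p t)
              * xind ((c (x i)).eval (fun j => if j ∈ s then v j else x j) = f x)
            = ((∏ j, p (x j))
              * xind ((c (x i)).eval (fun j => if j ∈ s then v j else x j) = f x)) * p t := by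
          intro t; ring
        rw [Finset.sum_congr rfl fun t _ => this t, ← Finset.mul_sum, hp, mul_one]
      have hinv : Function.Involutive
          (fun q : (Fin n → 𝒳) × 𝒳 => (Function.update q.1 i q.2, q.1 i)) := by
        intro q
        simp [Function.update_idem, Function.update_eq_self]
      have hw : ∀ (x : Fin n → 𝒳) (t : 𝒳),
          (∏ j, p (Function.update x i t j)) * p (x i) = (∏ j, p (x j)) * p t := by
        intro x t
        have e1 : (∏ j, p (Function.update x i t j))
            = p t * ∏ j ∈ Finset.univ.erase i, p (x j) := by
          rw [← Finset.mul_prod_erase Finset.univ (fun j => p (Function.update x i t j))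
            (Finset.mem_univ i), Function.update_self]
          congr 1
          exact Finset.prod_congr rfl fun j hj =>
            by rw [Function.update_of_ne (Finset.ne_of_mem_erase hj)]
        have e2 : (∏ j, p (x j)) = p (x i) * ∏ j ∈ Finset.univ.erase i, p (x j) :=
          (Finset.mul_prod_erase Finset.univ _ (Finset.mem_univ i)).symm
        rw [e1, e2]; ring
      have hsub : ∀ (x : Fin n → 𝒳) (t : 𝒳),
          (fun j => if j ∈ s then v j else Function.update x i t j)
          = (fun j => if j ∈ insert i s then Function.update v i t j else x j) := by
        intro x t
        funext j
        by_cases hj : j = i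
        · subst hj
          rw [if_neg hi, if_pos (Finset.mem_insert_self j s), Function.update_self,
            Function.update_self]
        · rw [Function.update_of_ne hj]
          by_cases hjs : j ∈ s
          · rw [if_pos hjs, if_pos (Finset.mem_insert_of_mem hjs), Function.update_of_ne hj]
          · rw [if_neg hjs, if_neg (by simp [hj, hjs])]
      have h2 : ∑ q : (Fin n → 𝒳) × 𝒳, ((∏ j, p (q.1 j)) * p q.2)
            * xind ((c q.2).eval
                (fun j => if j ∈ insert i s then Function.update v i q.2 j else q.1 j)
              = f (Function.update q.1 i q.2))
          = ∑ q : (Fin n → 𝒳) × 𝒳, ((∏ j, p (q.1 j)) * p q.2)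
            * xind ((c (q.1 i)).eval (fun j => if j ∈ s then v j else q.1 j) = f q.1) := by
        refine Fintype.sum_bijective _ hinv.bijective _ _ ?_
        intro q
        show _ = ((∏ j, p (Function.update q.1 i q.2 j)) * p (q.1 i))
            * xind ((c (Function.update q.1 i q.2 i)).eval
                (fun j => if j ∈ s then v j else Function.update q.1 i q.2 j)
              = f (Function.update q.1 i q.2))
        rw [hw q.1 q.2, Function.update_self, hsub q.1 q.2]
      have h3 : ∀ q : (Fin n → 𝒳) × 𝒳,
          xind ((c q.2).eval
              (fun j => if j ∈ insert i s then Function.update v i q.2 j else q.1 j)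
            = f (Function.update q.1 i q.2))
          ≤ xind (f q.1 ≠ f (Function.update q.1 i q.2))
            + xind ((c q.2).eval
                (fun j => if j ∈ insert i s then Function.update v i q.2 j else q.1 j)
              = f q.1) := by
        intro q
        apply xind_split
        intro h
        by_cases hf : f q.1 = f (Function.update q.1 i q.2)
        · exact Or.inr (h.trans hf.symm)
        · exact Or.inl hf
      have h4 : ∑ q : (Fin n → 𝒳) × 𝒳, ((∏ j, p (q.1 j)) * p q.2)
            * xind ((c q.2).eval
                (fun j => if j ∈ insert i s then Function.update v i q.2 j else q.1 j)
              = f q.1)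
          ≤ (d' : ℝ≥0∞) * I + M := by
        rw [Fintype.sum_prod_type_right]
        have inner : ∀ t : 𝒳, ∑ x : Fin n → 𝒳, ((∏ j, p (x j)) * p t)
              * xind ((c t).eval
                  (fun j => if j ∈ insert i s then Function.update v i t j else x j) = f x)
            = p t * ∑ x : Fin n → 𝒳, (∏ j, p (x j))
              * xind ((c t).eval
                  (fun j => if j ∈ insert i s then Function.update v i t j else x j) = f x) := by
          intro t
          rw [Finset.mul_sum]
          exact Finset.sum_congr rfl fun x _ => by ring
        calc ∑ t : 𝒳, ∑ x : Fin n → 𝒳, ((∏ j, p (x j)) * p t)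
              * xind ((c t).eval
                  (fun j => if j ∈ insert i s then Function.update v i t j else x j) = f x)
            ≤ ∑ t : 𝒳, p t * ((d' : ℝ≥0∞) * I + M) := by
              refine Finset.sum_le_sum fun t _ => ?_
              rw [inner t]
              refine mul_le_mul_right ?_ (p t)
              refine le_trans (ih t (insert i s) (Function.update v i t)) ?_
              refine add_le_add_left (mul_le_mul_left ?_ I) M
              exact Nat.cast_le.mpr (Finset.le_sup (f := fun a => (c a).depth)
                (Finset.mem_univ t))
          _ = (d' : ℝ≥0∞) * I + M := by rw [← Finset.sum_mul, hp, one_mul]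
      calc ∑ x : Fin n → 𝒳, (∏ j, p (x j))
            * xind ((DTree.node i c).eval (fun j => if j ∈ s then v j else x j) = f x)
          = ∑ x : Fin n → 𝒳, (∏ j, p (x j))
            * xind ((c (x i)).eval (fun j => if j ∈ s then v j else x j) = f x) := by
            exact Finset.sum_congr rfl fun x _ => by rw [heval x]
        _ = ∑ q : (Fin n → 𝒳) × 𝒳, ((∏ j, p (q.1 j)) * p q.2)
            * xind ((c (q.1 i)).eval (fun j => if j ∈ s then v j else q.1 j) = f q.1) := h1
        _ = ∑ q : (Fin n → 𝒳) × 𝒳, ((∏ j, p (q.1 j)) * p q.2)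
            * xind ((c q.2).eval
                (fun j => if j ∈ insert i s then Function.update v i q.2 j else q.1 j)
              = f (Function.update q.1 i q.2)) := h2.symm
        _ ≤ ∑ q : (Fin n → 𝒳) × 𝒳, ((∏ j, p (q.1 j)) * p q.2)
            * (xind (f q.1 ≠ f (Function.update q.1 i q.2))
              + xind ((c q.2).eval
                  (fun j => if j ∈ insert i s then Function.update v i q.2 j else q.1 j)
                = f q.1)) := by
              exact Finset.sum_le_sum fun q _ => mul_le_mul_right (h3 q) _
        _ = (∑ q : (Fin n → 𝒳) × 𝒳, ((∏ j, p (q.1 j)) * p q.2)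
              * xind (f q.1 ≠ f (Function.update q.1 i q.2)))
            + ∑ q : (Fin n → 𝒳) × 𝒳, ((∏ j, p (q.1 j)) * p q.2)
              * xind ((c q.2).eval
                  (fun j => if j ∈ insert i s then Function.update v i q.2 j else q.1 j)
                = f q.1) := by
              rw [← Finset.sum_add_distrib]
              exact Finset.sum_congr rfl fun q _ => mul_add _ _ _
        _ ≤ I + ((d' : ℝ≥0∞) * I + M) := add_le_add (hI i) h4
        _ = ((DTree.node i c).depth : ℝ≥0∞) * I + M := by
            rw [hdepth]
            push_cast
            ring


end Aux

/-- If a depth-k tree computes f with average error ε under μ^{⊗n}, then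
ε + k·Inf_max(f, μ) ≥ 1 − max_z Pr[f(X) = z]. -/
theorem error_depth_tradeoff
    {𝒳 𝒵 : Type} [Fintype 𝒳] [Fintype 𝒵] [Nonempty 𝒵] [MeasurableSpace 𝒳]
    {n : ℕ} (μ : Measure 𝒳) [IsProbabilityMeasure μ]
    (f : (Fin n → 𝒳) → 𝒵) (k : ℕ) (ε : ℝ≥0∞)
    (T : DTree 𝒳 𝒵 n) (hdepth : T.depth ≤ k)
    (herr : (Measure.pi fun _ : Fin n => μ) {x | T.eval x ≠ f x} ≤ ε) :
    ε + (k : ℝ≥0∞) * (⨆ i : Fin n, ((Measure.pi fun _ : Fin n => μ).prod μ)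
        {p | f p.1 ≠ f (Function.update p.1 i p.2)})
      ≥ 1 - ⨆ z : 𝒵, (Measure.pi fun _ : Fin n => μ) {x | f x = z} := by
  classical
  haveI hne : Nonempty 𝒳 := by
    by_contra h
    rw [not_nonempty_iff] at h
    have h0 : (Set.univ : Set 𝒳) = ∅ := Set.univ_eq_empty_iff.mpr h
    have h1 := measure_univ (μ := μ)
    rw [h0, measure_empty] at h1
    exact zero_ne_one h1
  set ν := (Measure.pi fun _ : Fin n => μ) with hν
  set Isup := ⨆ i : Fin n, (ν.prod μ) {p | f p.1 ≠ f (Function.update p.1 i p.2)} with hIs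
  set Msup := ⨆ z : 𝒵, ν {x | f x = z} with hMs
  rw [ge_iff_le, tsub_le_iff_right]
  set pw := pwt μ with hpw
  have hp : ∑ t : 𝒳, pw t = 1 := sum_pwt μ
  have hone : ∑ x : Fin n → 𝒳, (∏ j, pw (x j)) = 1 := by
    calc ∑ x : Fin n → 𝒳, (∏ j, pw (x j))
        = ∑ x ∈ Fintype.piFinset (fun _ : Fin n => (Finset.univ : Finset 𝒳)),
            ∏ j, pw (x j) := by rw [Fintype.piFinset_univ]
      _ = ∏ _j : Fin n, ∑ t : 𝒳, pw t := (Finset.prod_univ_sum _ _).symm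
      _ = 1 := by simp [hp]
  have hIarg : ∀ i : Fin n, ∑ q : (Fin n → 𝒳) × 𝒳,
      ((∏ j, pw (q.1 j)) * pw q.2) * xind (f q.1 ≠ f (Function.update q.1 i q.2)) ≤ Isup := by
    intro i
    refine le_trans (sum_pwt_le_prod μ {q : (Fin n → 𝒳) × 𝒳
      | f q.1 ≠ f (Function.update q.1 i q.2)}) ?_
    exact le_iSup (fun i => (ν.prod μ) {p | f p.1 ≠ f (Function.update p.1 i p.2)}) i
  have hMarg : ∀ z : 𝒵, ∑ x : Fin n → 𝒳, (∏ j, pw (x j)) * xind (f x = z) ≤ Msup := by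
    intro z
    refine le_trans (sum_pwt_le_meas μ {x | f x = z}) ?_
    exact le_iSup (fun z => ν {x | f x = z}) z
  have hkey := keyD pw hp f Isup Msup hIarg hMarg T ∅ (Classical.arbitrary _)
  simp only [Finset.notMem_empty, if_false] at hkey
  have hkey' : ∑ x : Fin n → 𝒳, (∏ j, pw (x j)) * xind (T.eval x = f x)
      ≤ (k : ℝ≥0∞) * Isup + Msup := by
    refine le_trans hkey (add_le_add_left (mul_le_mul_left ?_ Isup) Msup)
    exact Nat.cast_le.mpr hdepth
  have herr' : ∑ x : Fin n → 𝒳, (∏ j, pw (x j)) * xind (T.eval x ≠ f x) ≤ ε :=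
    le_trans (sum_pwt_le_meas μ {x | T.eval x ≠ f x}) herr
  have main : (1 : ℝ≥0∞) ≤ ε + ((k : ℝ≥0∞) * Isup + Msup) := by
    calc (1 : ℝ≥0∞) = ∑ x : Fin n → 𝒳, (∏ j, pw (x j)) := hone.symm
      _ ≤ ∑ x : Fin n → 𝒳, (∏ j, pw (x j))
          * (xind (T.eval x ≠ f x) + xind (T.eval x = f x)) := by
          refine Finset.sum_le_sum fun x _ => ?_
          conv_lhs => rw [← mul_one (∏ j, pw (x j))]
          exact mul_le_mul_right (one_le_xind_add (em (T.eval x = f x)).symm) _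
      _ = (∑ x : Fin n → 𝒳, (∏ j, pw (x j)) * xind (T.eval x ≠ f x))
          + ∑ x : Fin n → 𝒳, (∏ j, pw (x j)) * xind (T.eval x = f x) := by
          rw [← Finset.sum_add_distrib]
          exact Finset.sum_congr rfl fun x _ => mul_add _ _ _
      _ ≤ ε + ((k : ℝ≥0∞) * Isup + Msup) := add_le_add herr' hkey'
  rw [add_assoc]
  exact main
end

section
/- For every function f : 𝒳^n → 𝒵 depending on all its variables and every probability measure μ on 𝒳 with Inf_max(f, μ) > 0, every deterministic decision tree that computes f exactly on all inputs in the support must make at least (1 − max_z Pr[f(X)=z]) / Inf_max(f, μ) queries on some input (the ε = 0 case of the main theorem). -/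
open MeasureTheory Function
open scoped ENNReal


namespace OSSS

open Finset
open scoped Classical

set_option linter.unusedSectionVars false

variable {𝒳 𝒵 : Type} {n : ℕ} [inst𝒳 : Fintype 𝒳]

/-- Substitute value `a` for coordinate `i`: remove all queries to `i`. -/
def subst (i : Fin n) (a : 𝒳) : DTree 𝒳 𝒵 n → DTree 𝒳 𝒵 n
  | .leaf z => .leaf z
  | .node j c =>
      if j = i then subst i a (c a) else .node j (fun b => subst i a (c b))

lemma subst_eval (i : Fin n) (a : 𝒳) :
    ∀ (T : DTree 𝒳 𝒵 n) (x : Fin n → 𝒳),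
      (subst i a T).eval x = T.eval (Function.update x i a)
  | .leaf z, x => rfl
  | .node j c, x => by
    rw [subst]
    split_ifs with h
    · subst h
      rw [subst_eval j a (c a) x, DTree.eval]
      simp
    · rw [DTree.eval, subst_eval i a (c (x j)) x, DTree.eval,
        Function.update_of_ne h]

lemma subst_depth (i : Fin n) (a : 𝒳) :
    ∀ T : DTree 𝒳 𝒵 n, (subst i a T).depth ≤ T.depth
  | .leaf _ => le_rfl
  | .node j c => by
    rw [subst]
    split_ifs with h
    · subst h
      refine le_trans (subst_depth j a (c a)) ?_
      rw [DTree.depth]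
      exact le_trans (Finset.le_sup (f := fun b => (c b).depth) (mem_univ a))
        (Nat.le_add_left _ _)
    · rw [DTree.depth, DTree.depth]
      exact add_le_add_right (Finset.sup_mono_fun fun b _ => subst_depth i a (c b)) 1

def size : DTree 𝒳 𝒵 n → ℕ
  | .leaf _ => 0
  | .node _ c => 1 + ∑ a, size (c a)

lemma size_subst (i : Fin n) (a : 𝒳) :
    ∀ T : DTree 𝒳 𝒵 n, size (subst i a T) ≤ size T
  | .leaf _ => le_rfl
  | .node j c => by
    rw [subst]
    split_ifs with h
    · refine le_trans (size_subst i a (c a)) ?_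
      rw [size]
      exact le_trans
        (Finset.single_le_sum (f := fun b => size (c b)) (fun b _ => Nat.zero_le _)
          (mem_univ a))
        (Nat.le_add_left _ _)
    · rw [size, size]
      exact add_le_add_right (Finset.sum_le_sum fun b _ => size_subst i a (c b)) 1

lemma size_subst_child_lt (i : Fin n) (c : 𝒳 → DTree 𝒳 𝒵 n) (a b : 𝒳) :
    size (subst i b (c a)) < size (DTree.node i c) :=
  calc size (subst i b (c a)) ≤ size (c a) := size_subst i b (c a)
    _ < size (DTree.node i c) := by
        rw [size]
        exact Nat.lt_one_add_iff.mpr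
          (Finset.single_le_sum (f := fun b => size (c b)) (fun b _ => Nat.zero_le _)
            (mem_univ a))

/-- Normalization: never re-query a coordinate. -/
def norm {X Z : Type} {m : ℕ} [Fintype X] : DTree X Z m → DTree X Z m
  | .leaf z => .leaf z
  | .node i c => .node i (fun a => norm (subst i a (c a)))
termination_by T => size T
decreasing_by exact size_subst_child_lt _ _ _ _

lemma norm_eval : ∀ (T : DTree 𝒳 𝒵 n) (x : Fin n → 𝒳), (norm T).eval x = T.eval x
  | .leaf z, x => by rw [norm.eq_1]
  | .node i c, x => by
    rw [norm.eq_2, DTree.eval, DTree.eval]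
    rw [norm_eval (subst i (x i) (c (x i))) x, subst_eval, Function.update_eq_self]
termination_by T => size T
decreasing_by exact size_subst_child_lt _ _ _ _

lemma norm_depth : ∀ T : DTree 𝒳 𝒵 n, (norm T).depth ≤ T.depth
  | .leaf z => by rw [norm.eq_1]
  | .node i c => by
    rw [norm.eq_2, DTree.depth, DTree.depth]
    refine add_le_add_right (Finset.sup_mono_fun fun a _ => ?_) 1
    exact le_trans (norm_depth (subst i a (c a))) (subst_depth i a (c a))
termination_by T => size T
decreasing_by exact size_subst_child_lt _ _ _ _

/-- `T` never queries a coordinate in `S`. -/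
def Avoids (S : Finset (Fin n)) : DTree 𝒳 𝒵 n → Prop
  | .leaf _ => True
  | .node j c => j ∉ S ∧ ∀ a, Avoids S (c a)

/-- `T` never queries a coordinate in `S`, nor re-queries any coordinate. -/
def Good : Finset (Fin n) → DTree 𝒳 𝒵 n → Prop
  | _, .leaf _ => True
  | S, .node j c => j ∉ S ∧ ∀ a, Good (insert j S) (c a)

lemma avoids_empty : ∀ T : DTree 𝒳 𝒵 n, Avoids ∅ T
  | .leaf _ => trivial
  | .node j c => ⟨by simp, fun a => avoids_empty (c a)⟩

lemma avoids_subst (i : Fin n) (a : 𝒳) (S : Finset (Fin n)) :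
    ∀ T : DTree 𝒳 𝒵 n, Avoids S T → Avoids (insert i S) (subst i a T)
  | .leaf _, _ => trivial
  | .node j c, h => by
    rw [subst]
    split_ifs with hj
    · exact avoids_subst i a S (c a) (h.2 a)
    · exact ⟨by simp [hj, h.1], fun b => avoids_subst i a S (c b) (h.2 b)⟩

lemma good_norm : ∀ (T : DTree 𝒳 𝒵 n) (S : Finset (Fin n)), Avoids S T → Good S (norm T)
  | .leaf _, S, _ => by rw [norm.eq_1]; trivial
  | .node i c, S, h => by
    rw [norm.eq_2]
    exact ⟨h.1, fun a => good_norm (subst i a (c a)) (insert i S)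
      (avoids_subst i a S (c a) (h.2 a))⟩
termination_by T => size T
decreasing_by exact size_subst_child_lt _ _ _ _

lemma eval_insensitive :
    ∀ (T : DTree 𝒳 𝒵 n) (S : Finset (Fin n)), Good S T → ∀ j ∈ S, ∀ (x : Fin n → 𝒳) (b : 𝒳),
      T.eval (Function.update x j b) = T.eval x
  | .leaf _, _, _, _, _, _, _ => rfl
  | .node i c, S, h, j, hj, x, b => by
    rw [DTree.eval, DTree.eval, Function.update_of_ne (by rintro rfl; exact h.1 hj)]
    exact eval_insensitive (c (x i)) (insert i S) (h.2 (x i)) j (mem_insert_of_mem hj) x b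

/-- The hybrid input: run `T` on `u`, replacing each queried coordinate by `y`'s value. -/
def Hyb : DTree 𝒳 𝒵 n → (Fin n → 𝒳) → (Fin n → 𝒳) → (Fin n → 𝒳)
  | .leaf _, u, _ => u
  | .node i c, u, y => Hyb (c (u i)) (Function.update u i (y i)) y

end OSSS
namespace OSSS

open Finset
open scoped Classical

set_option linter.unusedSectionVars false

section Sums

variable {𝒳 : Type} {n : ℕ} [Fintype 𝒳]

/-- Characteristic function with values in `ℝ≥0∞`. -/
noncomputable def chi (p : Prop) : ℝ≥0∞ := if p then 1 else 0

@[simp] lemma chi_true {p : Prop} (h : p) : chi p = 1 := if_pos h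
@[simp] lemma chi_false {p : Prop} (h : ¬ p) : chi p = 0 := if_neg h

lemma chi_le_one {p : Prop} : chi p ≤ 1 := by
  unfold chi; split_ifs <;> simp

lemma chi_mono {p q : Prop} (h : p → q) : chi p ≤ chi q := by
  unfold chi; split_ifs with h1 h2 <;> simp_all

lemma chi_triangle {𝒵 : Type} (a b c : 𝒵) :
    chi (a ≠ c) ≤ chi (a ≠ b) + chi (b ≠ c) := by
  by_cases h1 : a = b
  · subst h1
    simpa [chi] using le_add_self
  · exact le_trans chi_le_one
      (le_trans (le_of_eq (chi_true h1).symm) le_self_add)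

lemma chi_ne_add_chi_eq {𝒵 : Type} (a b : 𝒵) : chi (a ≠ b) + chi (a = b) = 1 := by
  unfold chi
  by_cases h : a = b <;> simp [h]

lemma chi_sum_unique {𝒵 : Type} [Fintype 𝒵] (a : 𝒵) : ∑ z, chi (a = z) = 1 := by
  classical
  rw [Finset.sum_eq_single a (fun z _ hz => chi_false (fun h => hz h.symm))
    (fun h => absurd (Finset.mem_univ a) h)]
  simp

lemma chi_eq_expand {𝒵 : Type} [Fintype 𝒵] (a b : 𝒵) :
    chi (a = b) = ∑ z, chi (a = z) * chi (b = z) := by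
  classical
  by_cases h : a = b
  · subst h
    rw [chi_true rfl, ← chi_sum_unique a]
    exact Finset.sum_congr rfl fun z _ => by
      by_cases hz : a = z <;> simp [hz]
  · rw [chi_false h]
    symm
    refine Finset.sum_eq_zero fun z _ => ?_
    by_cases hz : a = z
    · rw [chi_false (show ¬ b = z from fun hb => h (hz.trans hb.symm)), mul_zero]
    · rw [chi_false hz, zero_mul]

/-- Product weight on tuples. -/
noncomputable def Wt (w : 𝒳 → ℝ≥0∞) (x : Fin n → 𝒳) : ℝ≥0∞ := ∏ i, w (x i)

variable (w : 𝒳 → ℝ≥0∞)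

/-- Combine a value at coordinate `i` with values elsewhere. -/
noncomputable def comb (i : Fin n) (b : 𝒳) (r : {j : Fin n // j ≠ i} → 𝒳) : Fin n → 𝒳 :=
  (Equiv.funSplitAt i 𝒳).symm (b, r)

lemma comb_self (i : Fin n) (b : 𝒳) (r : {j : Fin n // j ≠ i} → 𝒳) :
    comb i b r i = b := by
  simp [comb, Equiv.funSplitAt, Equiv.piSplitAt]

lemma comb_ne (i : Fin n) (b : 𝒳) (r : {j : Fin n // j ≠ i} → 𝒳) (j : Fin n) (h : j ≠ i) :
    comb i b r j = r ⟨j, h⟩ := by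
  simp [comb, Equiv.funSplitAt, Equiv.piSplitAt, h]

lemma update_comb (i : Fin n) (b a : 𝒳) (r : {j : Fin n // j ≠ i} → 𝒳) :
    Function.update (comb i b r) i a = comb i a r := by
  funext j
  by_cases h : j = i
  · subst h; rw [Function.update_self, comb_self]
  · rw [Function.update_of_ne h, comb_ne i b r j h, comb_ne i a r j h]

lemma Wt_comb (i : Fin n) (b : 𝒳) (r : {j : Fin n // j ≠ i} → 𝒳) :
    Wt w (comb i b r) = w b * ∏ j, w (r j) := by
  classical
  rw [Wt, Fintype.prod_eq_mul_prod_compl i, comb_self]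
  congr 1
  rw [Finset.prod_subtype (p := fun j : Fin n => j ≠ i) ({i}ᶜ : Finset (Fin n)) (fun x => by simp)
    (fun j => w (comb i b r j))]
  exact Finset.prod_congr rfl fun j _ => by rw [comb_ne i b r j j.2]

lemma split_sum (i : Fin n) (F : (Fin n → 𝒳) → ℝ≥0∞) :
    ∑ u, F u = ∑ b, ∑ r : {j : Fin n // j ≠ i} → 𝒳, F (comb i b r) := by
  rw [← Equiv.sum_comp (Equiv.funSplitAt i 𝒳).symm F, Fintype.sum_prod_type]
  rfl

variable (hw : ∑ a, w a = 1)
include hw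

lemma sum_Wt : ∑ u : Fin n → 𝒳, Wt w u = 1 := by
  unfold Wt
  classical
  rw [← Fintype.prod_sum (fun _ a => w a)]
  simp [hw]

lemma sum_WtR (i : Fin n) :
    ∑ r : {j : Fin n // j ≠ i} → 𝒳, ∏ j, w (r j) = 1 := by
  classical
  rw [← Fintype.prod_sum (fun _ a => w a)]
  simp [hw]

/-- Marginalize: only coordinate `i` matters. -/
lemma sum_Wt_coord (i : Fin n) (φ : 𝒳 → ℝ≥0∞) :
    ∑ t, Wt w t * φ (t i) = ∑ a, w a * φ a := by
  rw [split_sum i (fun t => Wt w t * φ (t i))]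
  refine Finset.sum_congr rfl fun b _ => ?_
  have : ∀ r : {j : Fin n // j ≠ i} → 𝒳,
      Wt w (comb i b r) * φ (comb i b r i) = (w b * φ b) * ∏ j, w (r j) := by
    intro r; rw [Wt_comb, comb_self]; ring
  rw [Finset.sum_congr rfl fun r _ => this r, ← Finset.mul_sum, sum_WtR w hw i, mul_one]

/-- Substitution identity: redraw coordinate `i`. -/
lemma sum_subst (i : Fin n) (F : (Fin n → 𝒳) → ℝ≥0∞) :
    ∑ b, w b * ∑ v, Wt w v * F (Function.update v i b) = ∑ v, Wt w v * F v := by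
  have inner : ∀ b, ∑ v, Wt w v * F (Function.update v i b)
      = ∑ r : {j : Fin n // j ≠ i} → 𝒳, (∏ j, w (r j)) * F (comb i b r) := by
    intro b
    rw [split_sum i (fun v => Wt w v * F (Function.update v i b))]
    rw [Finset.sum_comm]
    refine Finset.sum_congr rfl fun r _ => ?_
    have : ∀ a, Wt w (comb i a r) * F (Function.update (comb i a r) i b)
        = w a * ((∏ j, w (r j)) * F (comb i b r)) := by
      intro a; rw [Wt_comb, update_comb]; ring
    rw [Finset.sum_congr rfl fun a _ => this a, ← Finset.sum_mul, hw, one_mul]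
  rw [Finset.sum_congr rfl fun b _ => by rw [inner b]]
  rw [split_sum i (fun v => Wt w v * F v)]
  refine Finset.sum_congr rfl fun b _ => ?_
  rw [Finset.mul_sum]
  refine Finset.sum_congr rfl fun r _ => ?_
  rw [Wt_comb]; ring

/-- The key exchange step for the hybrid argument. -/
lemma sum_step (i : Fin n) [Nonempty 𝒳] (G : 𝒳 → (Fin n → 𝒳) → (Fin n → 𝒳) → ℝ≥0∞)
    (hG : ∀ b v t a, G b v (Function.update t i a) = G b v t) :
    ∑ u, ∑ t, Wt w u * Wt w t * G (u i) (Function.update u i (t i)) t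
      = ∑ b, w b * ∑ v, ∑ t, Wt w v * Wt w t * G b v t := by
  classical
  obtain ⟨star⟩ := ‹Nonempty 𝒳›
  have hGc : ∀ b v a (s : {j : Fin n // j ≠ i} → 𝒳),
      G b v (comb i a s) = G b v (comb i star s) := by
    intro b v a s
    rw [← update_comb i a star s]
    exact (hG b v (comb i a s) star).symm
  have hL : ∑ u, ∑ t, Wt w u * Wt w t * G (u i) (Function.update u i (t i)) t
      = ∑ b, ∑ r : {j : Fin n // j ≠ i} → 𝒳, ∑ a, ∑ s : {j : Fin n // j ≠ i} → 𝒳,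
        (w b * ∏ j, w (r j)) * (w a * ∏ j, w (s j)) * G b (comb i a r) (comb i star s) := by
    rw [split_sum i (fun u => ∑ t, Wt w u * Wt w t * G (u i) (Function.update u i (t i)) t)]
    refine Finset.sum_congr rfl fun b _ => Finset.sum_congr rfl fun r _ => ?_
    rw [split_sum i (fun t => Wt w (comb i b r) * Wt w t
      * G (comb i b r i) (Function.update (comb i b r) i (t i)) t)]
    refine Finset.sum_congr rfl fun a _ => Finset.sum_congr rfl fun s _ => ?_
    rw [Wt_comb, Wt_comb, comb_self, comb_self, update_comb, hGc]
  have hR : ∑ b, w b * ∑ v, ∑ t, Wt w v * Wt w t * G b v t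
      = ∑ b, ∑ r : {j : Fin n // j ≠ i} → 𝒳, ∑ a, ∑ s : {j : Fin n // j ≠ i} → 𝒳,
        (w b * ∏ j, w (r j)) * (w a * ∏ j, w (s j)) * G b (comb i a r) (comb i star s) := by
    refine Finset.sum_congr rfl fun b _ => ?_
    have inner2 : ∀ v, ∑ t, Wt w v * Wt w t * G b v t
        = ∑ s : {j : Fin n // j ≠ i} → 𝒳, Wt w v * (∏ j, w (s j)) * G b v (comb i star s) := by
      intro v
      rw [split_sum i (fun t => Wt w v * Wt w t * G b v t), Finset.sum_comm]
      refine Finset.sum_congr rfl fun s _ => ?_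
      have : ∀ a, Wt w v * Wt w (comb i a s) * G b v (comb i a s)
          = w a * (Wt w v * (∏ j, w (s j)) * G b v (comb i star s)) := by
        intro a; rw [Wt_comb, hGc]; ring
      rw [Finset.sum_congr rfl fun a _ => this a, ← Finset.sum_mul, hw, one_mul]
    rw [Finset.sum_congr rfl fun v _ => inner2 v]
    rw [split_sum i (fun v => ∑ s : {j : Fin n // j ≠ i} → 𝒳,
      Wt w v * (∏ j, w (s j)) * G b v (comb i star s))]
    simp only [Finset.mul_sum]
    rw [Finset.sum_comm]
    refine Finset.sum_congr rfl fun r _ => Finset.sum_congr rfl fun a _ =>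
      Finset.sum_congr rfl fun s _ => ?_
    rw [Wt_comb]; ring
  rw [hL, hR]

end Sums

end OSSS
namespace OSSS

open Finset
open scoped Classical

set_option linter.unusedSectionVars false

section Hybrid

variable {𝒳 𝒵 : Type} {n : ℕ} [Fintype 𝒳] [Fintype 𝒵]

/-- Merge: take `u` on `S`, `t` elsewhere. -/
noncomputable def mrg (S : Finset (Fin n)) (u t : Fin n → 𝒳) : Fin n → 𝒳 :=
  fun j => if j ∈ S then u j else t j

lemma mrg_coord (S : Finset (Fin n)) (i : Fin n) (h : i ∉ S) (u t : Fin n → 𝒳) :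
    mrg S u t i = t i := by simp [mrg, h]

lemma mrg_step (S : Finset (Fin n)) (i : Fin n) (h : i ∉ S) (u t : Fin n → 𝒳) :
    mrg S u t = mrg (insert i S) (Function.update u i (t i)) t := by
  funext j
  by_cases hj : j = i
  · subst hj
    simp [mrg, h]
  · by_cases hjS : j ∈ S <;>
      simp [mrg, hjS, hj, Function.update_of_ne hj]

lemma mrg_update_right (S : Finset (Fin n)) (i : Fin n) (h : i ∈ S) (u t : Fin n → 𝒳)
    (a : 𝒳) : mrg S u (Function.update t i a) = mrg S u t := by
  funext j
  by_cases hj : j = i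
  · subst hj; simp [mrg, h]
  · simp [mrg, Function.update_of_ne hj]

variable (w : 𝒳 → ℝ≥0∞) (f : (Fin n → 𝒳) → 𝒵)

/-- Influence of coordinate `i`. -/
noncomputable def Infl (i : Fin n) : ℝ≥0∞ :=
  ∑ u, Wt w u * ∑ a, w a * chi (f u ≠ f (Function.update u i a))

noncomputable def maxInfl : ℝ≥0∞ := ⨆ i, Infl w f i

variable (hw : ∑ a, w a = 1)
include hw

lemma hyb_bound [Nonempty 𝒳] :
    ∀ (T : DTree 𝒳 𝒵 n) (S : Finset (Fin n)), Good S T →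
      ∑ u, ∑ t, Wt w u * Wt w t * chi (f u ≠ f (Hyb T u (mrg S u t)))
        ≤ (T.depth : ℝ≥0∞) * maxInfl w f
  | .leaf z, S, _ => by
    simp [Hyb, chi]
  | .node i c, S, hGood => by
    obtain ⟨hiS, hGc⟩ := hGood
    have hterm : ∀ u t : Fin n → 𝒳,
        Wt w u * Wt w t * chi (f u ≠ f (Hyb (DTree.node i c) u (mrg S u t)))
        ≤ Wt w u * Wt w t * chi (f u ≠ f (Function.update u i (t i)))
          + Wt w u * Wt w t *
            chi (f (Function.update u i (t i)) ≠ f (Hyb (c (u i)) (Function.update u i (t i))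
              (mrg (insert i S) (Function.update u i (t i)) t))) := by
      intro u t
      have h1 : Hyb (DTree.node i c) u (mrg S u t)
          = Hyb (c (u i)) (Function.update u i (t i))
              (mrg (insert i S) (Function.update u i (t i)) t) := by
        rw [Hyb, mrg_coord S i hiS, mrg_step S i hiS]
      rw [h1, ← mul_add]
      exact mul_le_mul_right (chi_triangle _ _ _) _
    have hsum : ∑ u, ∑ t, Wt w u * Wt w t * chi (f u ≠ f (Hyb (DTree.node i c) u (mrg S u t)))
        ≤ (∑ u, ∑ t, Wt w u * Wt w t * chi (f u ≠ f (Function.update u i (t i))))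
          + ∑ u, ∑ t, Wt w u * Wt w t *
            chi (f (Function.update u i (t i)) ≠ f (Hyb (c (u i)) (Function.update u i (t i))
              (mrg (insert i S) (Function.update u i (t i)) t))) := by
      rw [← Finset.sum_add_distrib]
      refine Finset.sum_le_sum fun u _ => ?_
      rw [← Finset.sum_add_distrib]
      exact Finset.sum_le_sum fun t _ => hterm u t
    have hterm1 : (∑ u, ∑ t, Wt w u * Wt w t * chi (f u ≠ f (Function.update u i (t i))))
        ≤ maxInfl w f := by
      have : ∀ u : Fin n → 𝒳, ∑ t, Wt w u * Wt w t * chi (f u ≠ f (Function.update u i (t i)))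
          = Wt w u * ∑ a, w a * chi (f u ≠ f (Function.update u i a)) := by
        intro u
        rw [← sum_Wt_coord w hw i (fun a => chi (f u ≠ f (Function.update u i a))),
          Finset.mul_sum]
        exact Finset.sum_congr rfl fun t _ => by ring
      rw [Finset.sum_congr rfl fun u _ => this u]
      exact le_iSup (fun i => Infl w f i) i
    have hterm2 : (∑ u, ∑ t, Wt w u * Wt w t *
          chi (f (Function.update u i (t i)) ≠ f (Hyb (c (u i)) (Function.update u i (t i))
            (mrg (insert i S) (Function.update u i (t i)) t))))
        ≤ ((Finset.univ.sup fun a => (c a).depth : ℕ) : ℝ≥0∞) * maxInfl w f := by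
      rw [sum_step w hw i
        (fun b v t => chi (f v ≠ f (Hyb (c b) v (mrg (insert i S) v t))))
        (fun b v t a => by
          simp only [mrg_update_right (insert i S) i (mem_insert_self i S) v t a])]
      calc ∑ b, w b * ∑ v, ∑ t, Wt w v * Wt w t *
              chi (f v ≠ f (Hyb (c b) v (mrg (insert i S) v t)))
          ≤ ∑ b, w b * (((Finset.univ.sup fun a => (c a).depth : ℕ) : ℝ≥0∞) * maxInfl w f) := by
            refine Finset.sum_le_sum fun b _ => mul_le_mul_right ?_ _
            refine le_trans (hyb_bound (c b) (insert i S) (hGc b)) ?_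
            exact mul_le_mul_left
              (by exact_mod_cast Nat.cast_le.mpr (Finset.le_sup (f := fun a => (c a).depth)
                (mem_univ b))) _
        _ = ((Finset.univ.sup fun a => (c a).depth : ℕ) : ℝ≥0∞) * maxInfl w f := by
            rw [← Finset.sum_mul, hw, one_mul]
    refine le_trans hsum (le_trans (add_le_add hterm1 hterm2) ?_)
    rw [DTree.depth]
    push_cast
    rw [add_mul, one_mul]

lemma hyb_exchange [Nonempty 𝒳] :
    ∀ (T : DTree 𝒳 𝒵 n) (S : Finset (Fin n)) (g : (Fin n → 𝒳) → 𝒵), Good S T →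
      (∀ x, T.eval x = g x) →
      ∑ u, ∑ t, Wt w u * Wt w t * chi (g u ≠ f (Hyb T u (mrg S u t)))
        = ∑ v, Wt w v * ∑ v', Wt w v' * chi (g v ≠ f v')
  | .leaf z, S, g, _, hg => by
    have hgz : ∀ x : Fin n → 𝒳, g x = z := fun x => (hg x).symm
    simp only [Hyb, hgz]
    have hL : ∀ u : Fin n → 𝒳, ∑ t : Fin n → 𝒳, Wt w u * Wt w t * chi (z ≠ f u)
        = Wt w u * chi (z ≠ f u) := by
      intro u
      rw [Finset.sum_congr rfl fun t (_ : t ∈ Finset.univ) =>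
        (show Wt w u * Wt w t * chi (z ≠ f u) = (Wt w u * chi (z ≠ f u)) * Wt w t by ring),
        ← Finset.mul_sum, sum_Wt w hw, mul_one]
    rw [Finset.sum_congr rfl fun u _ => hL u, ← Finset.sum_mul, sum_Wt w hw, one_mul]
  | .node i c, S, g, hGood, hg => by
    obtain ⟨hiS, hGc⟩ := hGood
    have h1 : ∀ u t : Fin n → 𝒳,
        Wt w u * Wt w t * chi (g u ≠ f (Hyb (DTree.node i c) u (mrg S u t)))
        = Wt w u * Wt w t *
          chi (g (Function.update (Function.update u i (t i)) i (u i))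
            ≠ f (Hyb (c (u i)) (Function.update u i (t i))
              (mrg (insert i S) (Function.update u i (t i)) t))) := by
      intro u t
      rw [Hyb, mrg_coord S i hiS, mrg_step S i hiS, Function.update_idem,
        Function.update_eq_self]
    rw [Finset.sum_congr rfl fun u _ => Finset.sum_congr rfl fun t _ => h1 u t]
    rw [sum_step w hw i
      (fun b v t => chi (g (Function.update v i b) ≠ f (Hyb (c b) v (mrg (insert i S) v t))))
      (fun b v t a => by
        simp only [mrg_update_right (insert i S) i (mem_insert_self i S) v t a])]
    have hIH : ∀ b, ∑ v, ∑ t, Wt w v * Wt w t *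
          chi (g (Function.update v i b) ≠ f (Hyb (c b) v (mrg (insert i S) v t)))
        = ∑ v, Wt w v * ∑ v', Wt w v' * chi (g (Function.update v i b) ≠ f v') := by
      intro b
      have hcomp : ∀ x, (c b).eval x = g (Function.update x i b) := by
        intro x
        have h2 := hg (Function.update x i b)
        rw [DTree.eval, Function.update_self] at h2
        rw [← h2]
        exact (eval_insensitive (c b) (insert i S) (hGc b) i (mem_insert_self i S) x b).symm
      exact hyb_exchange (c b) (insert i S) (fun v => g (Function.update v i b))
        (hGc b) hcomp
    rw [Finset.sum_congr rfl fun b _ => by rw [hIH b]]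
    exact sum_subst w hw i (fun v => ∑ v', Wt w v' * chi (g v ≠ f v'))

end Hybrid

end OSSS
namespace OSSS

open Finset
open scoped Classical

set_option linter.unusedSectionVars false

section CoreThm

variable {𝒳 𝒵 : Type} {n : ℕ} [Fintype 𝒳] [Fintype 𝒵]
variable (w : 𝒳 → ℝ≥0∞) (f : (Fin n → 𝒳) → 𝒵) (hw : ∑ a, w a = 1)
include hw

theorem core [Nonempty 𝒳] (T : DTree 𝒳 𝒵 n) (hT : ∀ x, T.eval x = f x) :
    1 - (⨆ z : 𝒵, ∑ v, Wt w v * chi (f v = z)) ≤ (T.depth : ℝ≥0∞) * maxInfl w f := by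
  set P : 𝒵 → ℝ≥0∞ := fun z => ∑ v, Wt w v * chi (f v = z) with hP
  set Dq : ℝ≥0∞ := ∑ v, Wt w v * ∑ v', Wt w v' * chi (f v ≠ f v') with hDq
  have h2 := hyb_exchange w f hw (norm T) ∅ f (good_norm T ∅ (avoids_empty T))
    (fun x => (norm_eval T x).trans (hT x))
  have h1 := hyb_bound w f hw (norm T) ∅ (good_norm T ∅ (avoids_empty T))
  have hD : Dq ≤ (T.depth : ℝ≥0∞) * maxInfl w f := by
    rw [hDq, ← h2]
    refine le_trans h1 (mul_le_mul_left ?_ _)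
    exact_mod_cast Nat.cast_le.mpr (norm_depth T)
  -- the complementary quantity
  have hsplit : Dq + (∑ v, Wt w v * ∑ v', Wt w v' * chi (f v = f v')) = 1 := by
    rw [hDq, ← Finset.sum_add_distrib]
    have : ∀ v : Fin n → 𝒳, (Wt w v * ∑ v', Wt w v' * chi (f v ≠ f v'))
        + (Wt w v * ∑ v', Wt w v' * chi (f v = f v')) = Wt w v := by
      intro v
      rw [← mul_add, ← Finset.sum_add_distrib]
      have : ∀ v' : Fin n → 𝒳, Wt w v' * chi (f v ≠ f v') + Wt w v' * chi (f v = f v')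
          = Wt w v' := by
        intro v'
        rw [← mul_add, chi_ne_add_chi_eq, mul_one]
      rw [Finset.sum_congr rfl fun v' _ => this v', sum_Wt w hw, mul_one]
    rw [Finset.sum_congr rfl fun v _ => this v, sum_Wt w hw]
  have hPsum : ∑ z : 𝒵, P z = 1 := by
    rw [hP, Finset.sum_comm]
    have : ∀ v : Fin n → 𝒳, ∑ z : 𝒵, Wt w v * chi (f v = z) = Wt w v := by
      intro v
      rw [← Finset.mul_sum, chi_sum_unique, mul_one]
    rw [Finset.sum_congr rfl fun v _ => this v, sum_Wt w hw]
  have hEq : (∑ v, Wt w v * ∑ v', Wt w v' * chi (f v = f v')) ≤ ⨆ z : 𝒵, P z := by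
    have hexp : (∑ v, Wt w v * ∑ v', Wt w v' * chi (f v = f v'))
        = ∑ z : 𝒵, P z * P z := by
      have step1 : ∀ v : Fin n → 𝒳, ∑ v', Wt w v' * chi (f v = f v')
          = ∑ z : 𝒵, chi (f v = z) * ∑ v', Wt w v' * chi (f v' = z) := by
        intro v
        rw [Finset.sum_congr rfl fun v' (_ : v' ∈ Finset.univ) => by
          rw [chi_eq_expand (f v) (f v'), Finset.mul_sum]]
        rw [Finset.sum_comm]
        refine Finset.sum_congr rfl fun z _ => ?_
        rw [Finset.mul_sum]
        exact Finset.sum_congr rfl fun v' _ => by ring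
      rw [Finset.sum_congr rfl fun v (_ : v ∈ Finset.univ) => by
        rw [step1 v, Finset.mul_sum]]
      rw [Finset.sum_comm]
      refine Finset.sum_congr rfl fun z _ => ?_
      rw [hP, Finset.sum_mul]
      refine Finset.sum_congr rfl fun v _ => ?_
      ring
    rw [hexp]
    calc ∑ z : 𝒵, P z * P z ≤ ∑ z : 𝒵, (⨆ z' : 𝒵, P z') * P z :=
          Finset.sum_le_sum fun z _ => mul_le_mul_left (le_iSup P z) _
      _ = (⨆ z' : 𝒵, P z') * ∑ z : 𝒵, P z := by rw [Finset.mul_sum]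
      _ = ⨆ z' : 𝒵, P z' := by rw [hPsum, mul_one]
  refine le_trans ?_ hD
  rw [tsub_le_iff_right]
  calc (1 : ℝ≥0∞) = Dq + (∑ v, Wt w v * ∑ v', Wt w v' * chi (f v = f v')) := hsplit.symm
    _ ≤ Dq + ⨆ z : 𝒵, P z := add_le_add_right hEq _
end CoreThm

end OSSS
namespace OSSS

open Finset
open scoped Classical

set_option linter.unusedSectionVars false

section Glue

variable {𝒳 : Type} [Fintype 𝒳] [MeasurableSpace 𝒳]

/-- The measurable atom of a point. -/
def atom (x : 𝒳) : Set 𝒳 := ⋂₀ {S : Set 𝒳 | MeasurableSet S ∧ x ∈ S}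

lemma measurableSet_atom (x : 𝒳) : MeasurableSet (atom x) :=
  MeasurableSet.sInter (Set.toFinite _).countable fun _ hS => hS.1

lemma mem_atom_self (x : 𝒳) : x ∈ atom x :=
  Set.mem_sInter.mpr fun _ hS => hS.2

lemma atom_subset {A : Set 𝒳} (hA : MeasurableSet A) {x : 𝒳} (hx : x ∈ A) : atom x ⊆ A :=
  Set.sInter_subset_of_mem ⟨hA, hx⟩

lemma atom_eq_of_mem {x y : 𝒳} (h : y ∈ atom x) : atom y = atom x := by
  have hxy : x ∈ atom y := by
    simp only [atom, Set.mem_sInter]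
    rintro S ⟨hSm, hyS⟩
    by_contra hxS
    exact (Set.mem_sInter.mp h (Sᶜ) ⟨hSm.compl, hxS⟩) hyS
  apply Set.Subset.antisymm
  · intro v hv
    simp only [atom, Set.mem_sInter]
    rintro S ⟨hSm, hxS⟩
    exact Set.mem_sInter.mp hv S ⟨hSm, Set.mem_sInter.mp h S ⟨hSm, hxS⟩⟩
  · intro v hv
    simp only [atom, Set.mem_sInter]
    rintro S ⟨hSm, hyS⟩
    exact Set.mem_sInter.mp hv S ⟨hSm, Set.mem_sInter.mp hxy S ⟨hSm, hyS⟩⟩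

variable (μ : Measure 𝒳) [IsProbabilityMeasure μ]

/-- Discretized weights on points. -/
noncomputable def wof (x : 𝒳) : ℝ≥0∞ :=
  μ (atom x) / ((atom x).toFinite.toFinset.card : ℝ≥0∞)

lemma atomFinset_congr {x y : 𝒳} (h : atom y = atom x) :
    (atom y).toFinite.toFinset = (atom x).toFinite.toFinset := by
  ext v
  simp [Set.Finite.mem_toFinset, h]

lemma sum_w_atom (x : 𝒳) :
    ∑ y ∈ (atom x).toFinite.toFinset, wof μ y = μ (atom x) := by
  have hconst : ∀ y ∈ (atom x).toFinite.toFinset,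
      wof μ y = μ (atom x) / ((atom x).toFinite.toFinset.card : ℝ≥0∞) := by
    intro y hy
    have hy' : y ∈ atom x := (Set.Finite.mem_toFinset _).mp hy
    have e := atom_eq_of_mem hy'
    rw [wof]
    exact congrArg₂ (· / ·) (congrArg μ e)
      (congrArg (fun s : Finset 𝒳 => ((s.card : ℕ) : ℝ≥0∞)) (atomFinset_congr e))
  rw [Finset.sum_congr rfl hconst, Finset.sum_const, nsmul_eq_mul]
  have hpos : ((atom x).toFinite.toFinset.card : ℝ≥0∞) ≠ 0 := by
    have hx : x ∈ (atom x).toFinite.toFinset := (Set.Finite.mem_toFinset _).mpr (mem_atom_self x)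
    exact Nat.cast_ne_zero.mpr (Finset.card_ne_zero_of_mem hx)
  exact ENNReal.mul_div_cancel hpos (ENNReal.natCast_ne_top _)

lemma sum_w_meas {A : Set 𝒳} (hA : MeasurableSet A) :
    ∑ y ∈ A.toFinite.toFinset, wof μ y = μ A := by
  classical
  set F : 𝒳 → Finset 𝒳 := fun x => (atom x).toFinite.toFinset with hF
  set 𝔄 : Finset (Finset 𝒳) := (A.toFinite.toFinset).image F with h𝔄
  have hbi : A.toFinite.toFinset = 𝔄.biUnion id := by
    ext y
    simp only [h𝔄, Finset.mem_biUnion, Finset.mem_image, Set.Finite.mem_toFinset, id]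
    constructor
    · intro hy
      exact ⟨F y, ⟨y, hy, rfl⟩, (Set.Finite.mem_toFinset _).mpr (mem_atom_self y)⟩
    · rintro ⟨B, ⟨x, hx, rfl⟩, hyB⟩
      exact atom_subset hA hx ((Set.Finite.mem_toFinset _).mp hyB)
  have hdisj : Set.PairwiseDisjoint (↑𝔄) (id : Finset 𝒳 → Finset 𝒳) := by
    intro B1 h1 B2 h2 hne
    obtain ⟨x1, _, rfl⟩ := Finset.mem_image.mp (Finset.mem_coe.mp h1)
    obtain ⟨x2, _, rfl⟩ := Finset.mem_image.mp (Finset.mem_coe.mp h2)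
    refine Finset.disjoint_left.mpr fun y hy1 hy2 => hne ?_
    have e1 : atom y = atom x1 := atom_eq_of_mem ((Set.Finite.mem_toFinset _).mp hy1)
    have e2 : atom y = atom x2 := atom_eq_of_mem ((Set.Finite.mem_toFinset _).mp hy2)
    exact atomFinset_congr (e1.symm.trans e2)
  rw [hbi, Finset.sum_biUnion hdisj]
  have hterm : ∀ B ∈ 𝔄, ∑ y ∈ (id B : Finset 𝒳), wof μ y = μ (↑B : Set 𝒳) := by
    intro B hB
    obtain ⟨x, _, rfl⟩ := Finset.mem_image.mp hB
    rw [id]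
    rw [sum_w_atom μ x]
    congr 1
    exact (Set.Finite.coe_toFinset _).symm
  rw [Finset.sum_congr rfl hterm]
  rw [← measure_biUnion_finset ?hd ?hm]
  · congr 1
    ext y
    simp only [Set.mem_iUnion, Finset.mem_coe, exists_prop]
    constructor
    · rintro ⟨B, hB, hyB⟩
      obtain ⟨x, hx, rfl⟩ := Finset.mem_image.mp hB
      exact atom_subset hA ((Set.Finite.mem_toFinset _).mp hx)
        ((Set.Finite.mem_toFinset _).mp hyB)
    · intro hy
      exact ⟨F y, Finset.mem_image.mpr ⟨y, (Set.Finite.mem_toFinset _).mpr hy, rfl⟩,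
        (Set.Finite.mem_toFinset _).mpr (mem_atom_self y)⟩
  case hd =>
    intro B1 h1 B2 h2 hne
    exact Finset.disjoint_coe.mpr (hdisj h1 h2 hne)
  case hm =>
    intro B hB
    obtain ⟨x, _, rfl⟩ := Finset.mem_image.mp hB
    have : (↑(F x) : Set 𝒳) = atom x := Set.Finite.coe_toFinset _
    rw [this]
    exact measurableSet_atom x

lemma sum_wof : ∑ x : 𝒳, wof μ x = 1 := by
  have huniv : (Set.univ : Set 𝒳).toFinite.toFinset = Finset.univ := by
    ext x; simp
  have := sum_w_meas μ MeasurableSet.univ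
  rw [huniv] at this
  rw [this, measure_univ]

lemma sum_wof_chi {A : Set 𝒳} (hA : MeasurableSet A) :
    ∑ a : 𝒳, wof μ a * chi (a ∈ A) = μ A := by
  classical
  rw [← sum_w_meas μ hA]
  rw [show A.toFinite.toFinset = Finset.univ.filter (· ∈ A) from by
    ext a
    simp only [Set.Finite.mem_toFinset, Finset.mem_filter, Finset.mem_univ, true_and]]
  rw [Finset.sum_filter]
  refine Finset.sum_congr rfl fun a _ => ?_
  by_cases h : a ∈ A <;> simp [h, chi]

end Glue

end OSSS
namespace OSSS

open Finset MeasureTheory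
open scoped ENNReal Classical

set_option linter.unusedSectionVars false

section Product

variable {𝒳 : Type} [Fintype 𝒳] [MeasurableSpace 𝒳] {n : ℕ}
variable (μ : Measure 𝒳) [IsProbabilityMeasure μ]

lemma chi_pi {ι : Type} [Fintype ι] (p : ι → Prop) :
    chi (∀ i, p i) = ∏ i, chi (p i) := by
  by_cases h : ∀ i, p i
  · rw [chi_true h]
    exact (Finset.prod_eq_one fun i _ => chi_true (h i)).symm
  · rw [chi_false h]
    push_neg at h
    obtain ⟨i0, hi0⟩ := h
    exact (Finset.prod_eq_zero (Finset.mem_univ i0) (chi_false hi0)).symm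

lemma chi_and (p q : Prop) : chi (p ∧ q) = chi p * chi q := by
  by_cases hp : p <;> by_cases hq : q <;> simp [chi, hp, hq]

lemma indicator_eq_chi {α : Type*} (H : Set α) (x : α) :
    H.indicator (1 : α → ℝ≥0∞) x = chi (x ∈ H) := by
  by_cases h : x ∈ H
  · rw [Set.indicator_of_mem h, chi_true h]; rfl
  · rw [Set.indicator_of_notMem h, chi_false h]

lemma nu_pi_eq :
    (Measure.pi fun _ : Fin n => μ) = ∑ x : Fin n → 𝒳, (Wt (wof μ) x) • Measure.dirac x := by
  refine Measure.pi_eq (μ := fun _ : Fin n => μ) fun s hs => ?_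
  rw [Measure.finset_sum_apply]
  have hmeas : MeasurableSet (Set.pi Set.univ s) := MeasurableSet.univ_pi hs
  have hterm : ∀ x : Fin n → 𝒳, (Wt (wof μ) x • Measure.dirac x) (Set.pi Set.univ s)
      = ∏ i, (wof μ (x i) * chi (x i ∈ s i)) := by
    intro x
    rw [Measure.smul_apply, Measure.dirac_apply' x hmeas, smul_eq_mul]
    have : (Set.pi Set.univ s).indicator (1 : (Fin n → 𝒳) → ℝ≥0∞) x
        = chi (∀ i, x i ∈ s i) := by
      by_cases h : x ∈ Set.pi Set.univ s
      · rw [Set.indicator_of_mem h, chi_true (fun i => h i (Set.mem_univ i))]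
        rfl
      · rw [Set.indicator_of_notMem h, chi_false]
        intro hcon
        exact h fun i _ => hcon i
    rw [this, chi_pi, Wt, ← Finset.prod_mul_distrib]
  rw [Finset.sum_congr rfl fun x _ => hterm x, ← Fintype.prod_sum
    (fun (i : Fin n) (a : 𝒳) => wof μ a * chi (a ∈ s i))]
  exact Finset.prod_congr rfl fun i _ => sum_wof_chi μ (hs i)

lemma sum_eq_pi_meas {H : Set (Fin n → 𝒳)} (hH : MeasurableSet H) :
    ∑ x : Fin n → 𝒳, Wt (wof μ) x * chi (x ∈ H) = (Measure.pi fun _ : Fin n => μ) H := by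
  rw [nu_pi_eq μ, Measure.finset_sum_apply]
  refine Finset.sum_congr rfl fun x _ => ?_
  rw [Measure.smul_apply, Measure.dirac_apply' x hH, smul_eq_mul, indicator_eq_chi]

lemma sum_le_pi (s : Set (Fin n → 𝒳)) :
    ∑ x : Fin n → 𝒳, Wt (wof μ) x * chi (x ∈ s) ≤ (Measure.pi fun _ : Fin n => μ) s := by
  obtain ⟨H, hsH, hHm, hμH⟩ := exists_measurable_superset (Measure.pi fun _ : Fin n => μ) s
  calc ∑ x : Fin n → 𝒳, Wt (wof μ) x * chi (x ∈ s)
      ≤ ∑ x : Fin n → 𝒳, Wt (wof μ) x * chi (x ∈ H) :=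
        Finset.sum_le_sum fun x _ => mul_le_mul_right (chi_mono fun h => hsH h) _
    _ = (Measure.pi fun _ : Fin n => μ) H := sum_eq_pi_meas μ hHm
    _ = (Measure.pi fun _ : Fin n => μ) s := hμH

lemma nu_prod_eq :
    (Measure.pi fun _ : Fin n => μ).prod μ
      = ∑ p : (Fin n → 𝒳) × 𝒳, (Wt (wof μ) p.1 * wof μ p.2) • Measure.dirac p := by
  refine Measure.prod_eq fun s t hs ht => ?_
  rw [Measure.finset_sum_apply]
  have hmeas : MeasurableSet (s ×ˢ t) := hs.prod ht
  have hterm : ∀ p : (Fin n → 𝒳) × 𝒳,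
      ((Wt (wof μ) p.1 * wof μ p.2) • Measure.dirac p) (s ×ˢ t)
      = (Wt (wof μ) p.1 * chi (p.1 ∈ s)) * (wof μ p.2 * chi (p.2 ∈ t)) := by
    intro p
    rw [Measure.smul_apply, Measure.dirac_apply' p hmeas, smul_eq_mul]
    have : (s ×ˢ t).indicator (1 : (Fin n → 𝒳) × 𝒳 → ℝ≥0∞) p
        = chi (p.1 ∈ s) * chi (p.2 ∈ t) := by
      rw [← chi_and]
      by_cases h : p ∈ s ×ˢ t
      · rw [Set.indicator_of_mem h, chi_true (Set.mem_prod.mp h)]; rfl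
      · rw [Set.indicator_of_notMem h, chi_false (fun hc => h (Set.mem_prod.mpr hc))]
    rw [this]; ring
  rw [Finset.sum_congr rfl fun p _ => hterm p, Fintype.sum_prod_type]
  dsimp only
  rw [← Finset.sum_mul_sum, sum_eq_pi_meas μ hs, sum_wof_chi μ ht]

lemma sum_le_prod (B : Set ((Fin n → 𝒳) × 𝒳)) :
    ∑ p : (Fin n → 𝒳) × 𝒳, Wt (wof μ) p.1 * wof μ p.2 * chi (p ∈ B)
      ≤ ((Measure.pi fun _ : Fin n => μ).prod μ) B := by
  obtain ⟨H, hsH, hHm, hμH⟩ :=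
    exists_measurable_superset ((Measure.pi fun _ : Fin n => μ).prod μ) B
  have heq : ∑ p : (Fin n → 𝒳) × 𝒳, Wt (wof μ) p.1 * wof μ p.2 * chi (p ∈ H)
      = ((Measure.pi fun _ : Fin n => μ).prod μ) H := by
    rw [nu_prod_eq μ, Measure.finset_sum_apply]
    refine Finset.sum_congr rfl fun p _ => ?_
    rw [Measure.smul_apply, Measure.dirac_apply' p hHm, smul_eq_mul, indicator_eq_chi]
  calc ∑ p : (Fin n → 𝒳) × 𝒳, Wt (wof μ) p.1 * wof μ p.2 * chi (p ∈ B)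
      ≤ ∑ p : (Fin n → 𝒳) × 𝒳, Wt (wof μ) p.1 * wof μ p.2 * chi (p ∈ H) :=
        Finset.sum_le_sum fun p _ => mul_le_mul_right (chi_mono fun h => hsH h) _
    _ = ((Measure.pi fun _ : Fin n => μ).prod μ) H := heq
    _ = ((Measure.pi fun _ : Fin n => μ).prod μ) B := hμH

end Product

end OSSS
/-- ε = 0 case: a tree computing f exactly must have depth at least
(1 − max_z Pr[f(X)=z]) / Inf_max(f, μ). -/
theorem exact_computation_lower_bound
    {𝒳 𝒵 : Type} [Fintype 𝒳] [Fintype 𝒵] [Nonempty 𝒵] [MeasurableSpace 𝒳]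
    {n : ℕ} (μ : Measure 𝒳) [IsProbabilityMeasure μ]
    (f : (Fin n → 𝒳) → 𝒵)
    (hdep : ∀ i : Fin n, ∃ (x : Fin n → 𝒳) (a : 𝒳), f (Function.update x i a) ≠ f x)
    (hInf : 0 < ⨆ i : Fin n, ((Measure.pi fun _ : Fin n => μ).prod μ)
        {p | f p.1 ≠ f (Function.update p.1 i p.2)})
    (T : DTree 𝒳 𝒵 n) (hexact : ∀ x : Fin n → 𝒳, T.eval x = f x) :
    ((T.depth : ℕ) : ℝ≥0∞)
      ≥ (1 - ⨆ z : 𝒵, (Measure.pi fun _ : Fin n => μ) {x | f x = z})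
        / ⨆ i : Fin n, ((Measure.pi fun _ : Fin n => μ).prod μ)
            {p | f p.1 ≠ f (Function.update p.1 i p.2)} := by
  classical
  have hne : Nonempty 𝒳 := by
    by_contra h
    rw [not_nonempty_iff] at h
    have h1 : μ Set.univ = 1 := measure_univ
    rw [Set.univ_eq_empty_iff.mpr h, measure_empty] at h1
    exact zero_ne_one h1
  have hw : ∑ a, OSSS.wof μ a = 1 := OSSS.sum_wof μ
  have hcore := OSSS.core (OSSS.wof μ) f hw T hexact
  have hsupP : (⨆ z : 𝒵, ∑ v, OSSS.Wt (OSSS.wof μ) v * OSSS.chi (f v = z))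
      ≤ ⨆ z : 𝒵, (Measure.pi fun _ : Fin n => μ) {x | f x = z} := by
    refine iSup_mono fun z => ?_
    exact OSSS.sum_le_pi μ {x | f x = z}
  have hmaxI : OSSS.maxInfl (OSSS.wof μ) f
      ≤ ⨆ i : Fin n, ((Measure.pi fun _ : Fin n => μ).prod μ)
          {p | f p.1 ≠ f (Function.update p.1 i p.2)} := by
    refine iSup_mono fun i => ?_
    have h1 : OSSS.Infl (OSSS.wof μ) f i
        = ∑ p : (Fin n → 𝒳) × 𝒳, OSSS.Wt (OSSS.wof μ) p.1 * OSSS.wof μ p.2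
            * OSSS.chi (f p.1 ≠ f (Function.update p.1 i p.2)) := by
      rw [OSSS.Infl, Fintype.sum_prod_type]
      refine Finset.sum_congr rfl fun u _ => ?_
      rw [Finset.mul_sum]
      exact Finset.sum_congr rfl fun a _ => by ring
    exact le_trans (le_of_eq h1)
      (OSSS.sum_le_prod μ {p | f p.1 ≠ f (Function.update p.1 i p.2)})
  have hmain : (1 - ⨆ z : 𝒵, (Measure.pi fun _ : Fin n => μ) {x | f x = z})
      ≤ ((T.depth : ℕ) : ℝ≥0∞) * ⨆ i : Fin n, ((Measure.pi fun _ : Fin n => μ).prod μ)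
          {p | f p.1 ≠ f (Function.update p.1 i p.2)} :=
    le_trans (tsub_le_tsub_left hsupP 1) (le_trans hcore (mul_le_mul_right hmaxI _))
  exact ENNReal.div_le_of_le_mul hmain
end
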